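/- arXiv:1606.02893 — 4 statements merged into one kernel-verified Lean document; each statement's English description precedes it below -/
import Mathlib

section
/- For 1/2 < p < 1, n a nonnegative integer, and J ∈ {0, 1, ..., n/2} (with n even), the quantity q_J := m_J · Σ_{m=-J}^{J} p^{n/2+m}(1-p)^{n/2-m}, where m_J = (2J+1)/(n+1) · C(n+1, n/2+J+1), equals ((2J+1)/(2J_0)) · [B(n/2+J+1) - B(n/2-J)], where B(k) = p^k (1-p)^{n+1-k} C(n+1,k) and J_0 = (p-1/2)(n+1). -/
/-- Telescoping geometric sum. -/
lemma telescope_sum (p : ℝ) : ∀ (m a b : ℕ),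
    (2*p-1) * ∑ k ∈ Finset.range (m+1), p^(a+m-k) * (1-p)^(b+k)
      = p^(a+m+1) * (1-p)^b - p^a * (1-p)^(b+m+1) := by
  intro m
  induction m with
  | zero => intro a b; simp; ring
  | succ m ih =>
    intro a b
    rw [Finset.sum_range_succ]
    have h1 : ∀ k ∈ Finset.range (m+1),
        p^(a+(m+1)-k) * (1-p)^(b+k) = p^((a+1)+m-k) * (1-p)^(b+k) := by
      intro k hk
      congr 2
      omega
    rw [Finset.sum_congr rfl h1, mul_add, ih (a+1) b]
    have h2 : a + (m+1) - (m+1) = a := by omega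
    rw [h2]
    ring

/-- The spectral probability `q_J = m_J ∑_{m=-J}^{J} p^(n/2+m)(1-p)^(n/2-m)` for measuring
total angular momentum `J` on `n` qubits in state `diag(p,1-p)^{⊗n}`, with multiplicity
`m_J = (2J+1)/(n+1) · C(n+1, n/2+J+1)`, equals
`((2J+1)/(2J₀)) [B(n/2+J+1) - B(n/2-J)]` where `B(k) = C(n+1,k) p^k (1-p)^(n+1-k)` and
`J₀ = (p-1/2)(n+1)`.  (The sum over `m = -J,…,J` is reindexed by `k = J - m`.) -/
theorem qJ_formula (p : ℝ) (hp : 1/2 < p) (hp1 : p < 1) (n J : ℕ)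
    (hn : Even n) (hJ : J ≤ n/2) :
    ((2*J+1 : ℝ)/(n+1) * (Nat.choose (n+1) (n/2+J+1) : ℝ)) *
        (∑ k ∈ Finset.range (2*J+1), p^(n/2+J-k) * (1-p)^(n/2-J+k))
      = ((2*J+1 : ℝ)/(2*((p - 1/2)*(n+1)))) *
        ((Nat.choose (n+1) (n/2+J+1) : ℝ) * p^(n/2+J+1) * (1-p)^(n+1-(n/2+J+1))
          - (Nat.choose (n+1) (n/2-J) : ℝ) * p^(n/2-J) * (1-p)^(n+1-(n/2-J))) := by
  set a := n/2 - J with ha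
  obtain ⟨w, hw⟩ := hn
  have hn2 : 2 * (n/2) = n := by omega
  have e1 : n/2 + J = a + 2*J := by omega
  have e2 : n/2 - J = a := rfl
  have e3 : n + 1 - (n/2 + J + 1) = a := by omega
  have e4 : n + 1 - (n/2 - J) = a + 2*J + 1 := by omega
  have hsym : (Nat.choose (n+1) (n/2-J) : ℝ) = (Nat.choose (n+1) (n/2+J+1) : ℝ) := by
    have h : n/2 - J = (n+1) - (n/2+J+1) := by omega
    rw [h, Nat.choose_symm (by omega)]
  have hsum : ∀ k ∈ Finset.range (2*J+1),
      p^(n/2+J-k) * (1-p)^(n/2-J+k) = p^(a+2*J-k) * (1-p)^(a+k) := by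
    intro k hk
    congr 2 <;> omega
  rw [Finset.sum_congr rfl hsum, hsym, e3, e4, e1]
  have e5 : n + 1 - (a + 2*J + 1) = a := by omega
  have e6 : n + 1 - a = a + 2*J + 1 := by omega
  have key := telescope_sum p (2*J) a a
  have hne : (2*p - 1) ≠ 0 := by nlinarith
  have hn1 : (n+1 : ℝ) ≠ 0 := by positivity
  set C := ((Nat.choose (n+1) (a+2*J+1)) : ℝ) with hC
  set S := ∑ k ∈ Finset.range (2*J+1), p^(a+2*J-k) * (1-p)^(a+k) with hS
  have hr : C * p^(a+2*J+1) * (1-p)^a - C * p^a * (1-p)^(a+2*J+1)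
      = C * ((2*p-1) * S) := by rw [key]; ring
  rw [hr]
  have hden : (2*((p - 1/2)*((n:ℝ)+1))) = (2*p-1)*((n:ℝ)+1) := by ring
  rw [hden, div_mul_eq_mul_div, div_mul_eq_mul_div, div_mul_eq_mul_div,
    div_eq_div_iff hn1 (mul_ne_zero hne hn1)]
  ring
end

section
/- The probabilities q_J = ((2J+1)/(2J_0))·[B(n/2+J+1) - B(n/2-J)] for J = 0, 1, ..., n/2 sum to 1, where B(k) = C(n+1,k) p^k (1-p)^{n+1-k} and J_0 = (p-1/2)(n+1). -/
open Finset

lemma binom_sum (p : ℝ) (M : ℕ) :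
    ∑ k ∈ range (M+1), (Nat.choose M k : ℝ) * p^k * (1-p)^(M-k) = 1 := by
  calc ∑ k ∈ range (M+1), (Nat.choose M k : ℝ) * p^k * (1-p)^(M-k)
      = ∑ k ∈ range (M+1), p^k * (1-p)^(M-k) * (Nat.choose M k : ℝ) := by
        apply Finset.sum_congr rfl; intros; ring
    _ = (p + (1-p))^M := (add_pow p (1-p) M).symm
    _ = 1 := by norm_num

lemma binom_mean (p : ℝ) (M : ℕ) :
    ∑ k ∈ range (M+1), (k : ℝ) * ((Nat.choose M k : ℝ) * p^k * (1-p)^(M-k)) = M * p := by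
  induction M with
  | zero => simp
  | succ L _ =>
    rw [Finset.sum_range_succ' (fun k => (k : ℝ) * ((Nat.choose (L+1) k : ℝ) * p^k * (1-p)^(L+1-k)))]
    simp only [Nat.cast_zero, zero_mul, add_zero]
    have key : ∀ j, (j:ℕ) ∈ range (L+1) →
        ((j+1 : ℕ) : ℝ) * ((Nat.choose (L+1) (j+1) : ℝ) * p^(j+1) * (1-p)^(L+1-(j+1)))
          = ((L+1 : ℕ) : ℝ) * p * ((Nat.choose L j : ℝ) * p^j * (1-p)^(L-j)) := by
      intro j _
      have h : (j+1) * Nat.choose (L+1) (j+1) = (L+1) * Nat.choose L j := by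
        rw [mul_comm]; exact (Nat.add_one_mul_choose_eq L j).symm
      have h' : ((j+1:ℕ):ℝ) * (Nat.choose (L+1) (j+1) : ℝ) = ((L+1:ℕ):ℝ) * (Nat.choose L j : ℝ) := by
        exact_mod_cast congrArg (Nat.cast : ℕ → ℝ) h
      have he : L + 1 - (j+1) = L - j := by omega
      rw [he]
      calc ((j+1 : ℕ) : ℝ) * ((Nat.choose (L+1) (j+1) : ℝ) * p^(j+1) * (1-p)^(L-j))
          = (((j+1:ℕ):ℝ) * (Nat.choose (L+1) (j+1) : ℝ)) * p^(j+1) * (1-p)^(L-j) := by ring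
        _ = (((L+1:ℕ):ℝ) * (Nat.choose L j : ℝ)) * p^(j+1) * (1-p)^(L-j) := by rw [h']
        _ = ((L+1 : ℕ) : ℝ) * p * ((Nat.choose L j : ℝ) * p^j * (1-p)^(L-j)) := by ring
    rw [Finset.sum_congr rfl key, ← Finset.mul_sum, binom_sum p L]
    push_cast; ring

/-- The spectral probabilities `q_J = ((2J+1)/(2J₀))[B(n/2+J+1) - B(n/2-J)]`,
`J = 0,…,n/2`, sum to `1`, where `B(k) = C(n+1,k) p^k (1-p)^(n+1-k)` and
`J₀ = (p-1/2)(n+1)`. -/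
theorem qJ_sum_to_one (p : ℝ) (hp : 1/2 < p) (hp1 : p < 1) (n : ℕ) (hn : Even n) :
    ∑ J ∈ Finset.range (n/2+1),
        ((2*J+1 : ℝ)/(2*((p - 1/2)*(n+1)))) *
          ((Nat.choose (n+1) (n/2+J+1) : ℝ) * p^(n/2+J+1) * (1-p)^(n+1-(n/2+J+1))
            - (Nat.choose (n+1) (n/2-J) : ℝ) * p^(n/2-J) * (1-p)^(n+1-(n/2-J)))
      = 1 := by
  obtain ⟨m, rfl⟩ := hn
  have hm2 : (m + m)/2 = m := by omega
  set M := m + m + 1 with hM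
  set B : ℕ → ℝ := fun k => (Nat.choose M k : ℝ) * p^k * (1-p)^(M-k) with hB
  set f : ℕ → ℝ := fun k => (2*(k:ℝ) - M) * B k with hf
  set c : ℝ := 1/(2*((p - 1/2)*(M:ℝ))) with hc
  have hMc : ((m+m:ℕ):ℝ) + 1 = (M:ℝ) := by push_cast [hM]; ring
  have step1 : ∑ J ∈ Finset.range ((m+m)/2+1),
        ((2*J+1 : ℝ)/(2*((p - 1/2)*((m+m:ℕ)+1)))) *
          ((Nat.choose ((m+m)+1) ((m+m)/2+J+1) : ℝ) * p^((m+m)/2+J+1) * (1-p)^((m+m)+1-((m+m)/2+J+1))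
            - (Nat.choose ((m+m)+1) ((m+m)/2-J) : ℝ) * p^((m+m)/2-J) * (1-p)^((m+m)+1-((m+m)/2-J)))
      = c * ∑ J ∈ range (m+1), ((2*J+1 : ℝ) * B (m+1+J) + f (m - J)) := by
    rw [Finset.mul_sum]
    rw [hm2]
    apply Finset.sum_congr rfl
    intro J hJ
    have hJm : J ≤ m := by simpa using Nat.lt_succ_iff.mp (Finset.mem_range.mp hJ)
    have e1 : m + m + 1 - (m + J + 1) = m - J := by omega
    have e2 : m + m + 1 - (m - J) = m + 1 + J := by omega
    have e3 : m + J + 1 = m + 1 + J := by omega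
    have e4 : M - (m+1+J) = m - J := by omega
    have e5 : M - (m-J) = m+1+J := by omega
    have ecast : ((m - J : ℕ) : ℝ) = (m : ℝ) - J := by
      push_cast [hJm]; ring
    rw [e1, e2, e3, hB, hf, hB]
    simp only [e4, e5, hMc]
    have : (2*((m-J:ℕ):ℝ) - (M:ℝ)) = -(2*(J:ℝ)+1) := by
      rw [ecast]; push_cast [hM]; ring
    rw [this, hc]
    ring
  rw [step1]
  have refl1 : ∑ J ∈ range (m+1), f (m - J) = ∑ k ∈ range (m+1), f k := by
    have := Finset.sum_range_reflect f (m+1)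
    simpa using this
  have shift1 : ∑ J ∈ range (m+1), (2*(J:ℝ)+1) * B (m+1+J)
      = ∑ J ∈ range (m+1), f (m+1+J) := by
    apply Finset.sum_congr rfl
    intro J _
    have h2 : (2*((m+1+J:ℕ):ℝ) - (M:ℝ)) = 2*(J:ℝ)+1 := by push_cast [hM]; ring
    simp only [hf]
    rw [h2]
  rw [Finset.sum_add_distrib, refl1, shift1]
  have total : ∑ k ∈ range (m+1), f k + ∑ J ∈ range (m+1), f (m+1+J)
      = ∑ k ∈ range (M+1), f k := by
    calc ∑ k ∈ range (m+1), f k + ∑ J ∈ range (m+1), f (m+1+J)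
        = ∑ k ∈ range ((m+1)+(m+1)), f k := (Finset.sum_range_add f (m+1) (m+1)).symm
      _ = ∑ k ∈ range (M+1), f k := by rw [show (m+1)+(m+1) = M+1 by omega]
  rw [add_comm (∑ J ∈ range (m+1), f (m+1+J)), total]
  have hsum : ∑ k ∈ range (M+1), f k = 2*(M:ℝ)*p - M := by
    have h1 := binom_sum p M
    have h2 := binom_mean p M
    calc ∑ k ∈ range (M+1), f k
        = ∑ k ∈ range (M+1), (2 * ((k:ℝ) * ((Nat.choose M k : ℝ) * p^k * (1-p)^(M-k)))
            - (M:ℝ) * ((Nat.choose M k : ℝ) * p^k * (1-p)^(M-k))) := by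
          apply Finset.sum_congr rfl; intro k _; rw [hf, hB]; ring
      _ = 2 * (∑ k ∈ range (M+1), (k:ℝ) * ((Nat.choose M k : ℝ) * p^k * (1-p)^(M-k)))
            - (M:ℝ) * ∑ k ∈ range (M+1), ((Nat.choose M k : ℝ) * p^k * (1-p)^(M-k)) := by
          rw [Finset.sum_sub_distrib, Finset.mul_sum, Finset.mul_sum]
      _ = 2*(M:ℝ)*p - M := by rw [h1, h2]; ring
  rw [hsum, hc]
  have hM0 : (0:ℝ) < (M:ℝ) := by positivity
  have hd : (0:ℝ) < 2*((p - 1/2)*(M:ℝ)) := by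
    have : (0:ℝ) < p - 1/2 := by linarith
    positivity
  rw [div_mul_eq_mul_div, div_eq_one_iff_eq (ne_of_gt hd)]
  ring
end

section
/- The combinatorial identity Σ_k C(2K−2J, K−J+k−m) C(2J, J+m) / C(2K, K+k) · ((2J+1)/(2K+1)) = 1 for each fixed m with −J ≤ m ≤ J and J ≤ K, i.e., the diagonal outputs of the universal cloning channel on |J,m⟩⟨J,m| form a probability distribution over k ∈ {−K, ..., K}. -/
/-!
Put `N = 2K`, `M = 2J`. The hypergeometric symmetry
`C(N-M, k-a) C(M, a) / C(N, k) = C(k, a) C(N-k, M-a) / C(N, M)`, together with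
`(M+1)/((N+1) C(N, M)) = 1 / C(N+1, M+1)`, turns the `k`-th term into
`C(k, a) C(N-k, M-a) / C(N+1, M+1)`. These sum to `1` by the dual Vandermonde identity
`∑_k C(k, a) C(N-k, b) = C(N+1, a+b+1)`.
-/

/-- Diagonal matrix element of the universal cloning channel `C_{J→K}` (for `J ≤ K`) on
`|J,m⟩⟨J,m|`, with natural indices `a = J + m ∈ {0,…,2J}`, `k' = K + k ∈ {0,…,2K}`:
`((2J+1)/(2K+1)) C(2K-2J, K-J+k-m) C(2J, J+m) / C(2K, K+k)`. -/
noncomputable def cloneDiag (J K a k' : ℕ) : ℝ :=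
  ((2*J+1 : ℝ)/(2*K+1)) *
    (if a ≤ k' then ((2*K-2*J).choose (k'-a) : ℝ) else 0) *
    ((2*J).choose a : ℝ) / ((2*K).choose k' : ℝ)

namespace Nat

theorem sum_range_choose_mul_choose_sub (n a b : ℕ) :
    ∑ k ∈ Finset.range (n + 1), k.choose a * (n - k).choose b = (n + 1).choose (a + b + 1) := by
  induction n generalizing a with
  | zero => cases a <;> simp [eq_comm (a := 0), choose_eq_zero_iff, choose_succ_succ']
  | succ n ih =>
    rw [Finset.sum_range_succ']
    simp only [add_tsub_add_eq_tsub_right, tsub_zero]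
    cases a with
    | zero =>
      have h0 := ih 0
      simp only [choose_zero_right, one_mul, zero_add] at h0 ⊢
      rw [h0, choose_succ_succ' (n + 1) b, add_comm]
    | succ a =>
      simp only [choose_succ_succ' _ a, add_mul, Finset.sum_add_distrib, ih, choose_zero_succ,
        zero_mul, add_zero]
      rw [show a + 1 + b + 1 = a + b + 1 + 1 by ring, choose_succ_succ' (n + 1) (a + b + 1)]

theorem choose_mul_choose_sub_comm (n r s : ℕ) :
    n.choose r * (n - r).choose s = n.choose s * (n - s).choose r := by
  calc n.choose r * (n - r).choose s = n.choose (r + s) * (r + s).choose r := by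
        rw [choose_mul (le_add_right r s), add_tsub_cancel_left]
    _ = n.choose (r + s) * (r + s).choose s := by rw [choose_symm_add]
    _ = n.choose s * (n - s).choose r := by
        rw [choose_mul (le_add_left s r), add_tsub_cancel_right]

theorem choose_sub_mul_choose_mul_choose {n m k a : ℕ} (ham : a ≤ m) (hak : a ≤ k) :
    (n - m).choose (k - a) * m.choose a * n.choose m =
      k.choose a * (n - k).choose (m - a) * n.choose k := by
  have hm : n - m = (n - a) - (m - a) := by omega
  have hk : n - k = (n - a) - (k - a) := by omega
  calc (n - m).choose (k - a) * m.choose a * n.choose m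
      = n.choose a * ((n - a).choose (m - a) * ((n - a) - (m - a)).choose (k - a)) := by
        rw [← hm, ← mul_assoc, ← choose_mul ham]; ring
    _ = n.choose a * ((n - a).choose (k - a) * ((n - a) - (k - a)).choose (m - a)) := by
        rw [choose_mul_choose_sub_comm]
    _ = k.choose a * (n - k).choose (m - a) * n.choose k := by
        rw [← hk, ← mul_assoc, ← choose_mul hak]; ring

end Nat

theorem cloneDiag_eq {J K a k' : ℕ} (hJK : J ≤ K) (ha : a ≤ 2 * J) (hk' : k' ≤ 2 * K) :
    cloneDiag J K a k' =
      (k'.choose a * (2 * K - k').choose (2 * J - a) : ℝ) / (2 * K + 1).choose (2 * J + 1) := by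
  unfold cloneDiag
  split_ifs with hak
  · have hsymm := Nat.choose_sub_mul_choose_mul_choose (n := 2 * K) ha hak
    have hsucc := Nat.add_one_mul_choose_eq (2 * K) (2 * J)
    have hNk : ((2 * K).choose k' : ℝ) ≠ 0 := by exact_mod_cast (Nat.choose_pos hk').ne'
    have hN1M1 : ((2 * K + 1).choose (2 * J + 1) : ℝ) ≠ 0 := by
      exact_mod_cast (Nat.choose_pos (by omega)).ne'
    have hNM : ((2 * K).choose (2 * J) : ℝ) ≠ 0 := by exact_mod_cast (Nat.choose_pos (by omega)).ne'
    field_simp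
    refine mul_right_cancel₀ hNM ?_
    have hsymm' := congrArg (Nat.cast : ℕ → ℝ) hsymm
    have hsucc' := congrArg (Nat.cast : ℕ → ℝ) hsucc
    push_cast at hsymm' hsucc'
    linear_combination (2 * (J : ℝ) + 1) * ((2 * K + 1).choose (2 * J + 1) : ℝ) * hsymm' -
      (k'.choose a * (2 * K - k').choose (2 * J - a) * (2 * K).choose k' : ℝ) * hsucc'
  · simp [Nat.choose_eq_zero_of_lt (not_le.mp hak)]

/-- Trace preservation of the universal cloning channel: for fixed `m` (`a = J+m`),
the diagonal outputs of `C_{J→K}(|J,m⟩⟨J,m|)` form a probability distribution over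
`k ∈ {-K,…,K}`:  `∑_k ((2J+1)/(2K+1)) C(2K-2J, K-J+k-m) C(2J, J+m) / C(2K, K+k) = 1`. -/
theorem cloning_diagonal_sum_one (J K a : ℕ) (hJK : J ≤ K) (ha : a ≤ 2*J) :
    ∑ k' ∈ Finset.range (2*K+1), cloneDiag J K a k' = 1 := by
  have hconv := Nat.sum_range_choose_mul_choose_sub (2 * K) a (2 * J - a)
  rw [show a + (2 * J - a) + 1 = 2 * J + 1 by omega] at hconv
  rw [Finset.sum_congr rfl fun k' hk' => cloneDiag_eq hJK ha (Finset.mem_range_succ_iff.mp hk'),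
    ← Finset.sum_div, div_eq_one_iff_eq (by exact_mod_cast (Nat.choose_pos (by omega)).ne')]
  exact_mod_cast hconv
end

section
/- Lemma 1 (cloning error bound, case J > K): for 1/2 < p < 1 and K < J, the trace distance between the marginal of the Gibbs state and the smaller Gibbs state satisfies (1/2)‖Tr_{2(J−K)}[ρ_J] − ρ_K‖₁ ≤ (δ^{1−s}/2)(1 + O(δ^s)) for any s > 0, where δ = (J−K)/J, ρ_J is the Gibbs state on the symmetric subspace of 2J qubits with eigenvalues p^{J+m}(1−p)^{J−m}/N_J. -/
open Finset in
/-- Diagonal matrix element of the universal cloning channel `C_{J→K}` for `J > K`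
(partial trace over `2(J-K)` qubits) on the Dicke state `|J,m⟩⟨J,m|`, with natural
indices `a = J + m ∈ {0,…,2J}` and `k' = K + k ∈ {0,…,2K}`:
`⟨K,k|C_{J→K}(|J,m⟩⟨J,m|)|K,k⟩ = C(2J-2K, J-K+m-k) C(2K, K+k) / C(2J, J+m)`. -/
noncomputable def traceDiag (J K a k' : ℕ) : ℝ :=
  (if k' ≤ a then ((2*J-2*K).choose (a-k') : ℝ) else 0) *
    ((2*K).choose k' : ℝ) / ((2*J).choose a : ℝ)

/-!
The cloning channels form a semigroup, `C_{L→K} ∘ C_{J→L} = C_{J→K}` (Vandermonde's identity),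
and on diagonal states each of them is given by a stochastic matrix, hence is an `ℓ¹`-contraction.
The error therefore telescopes:
`‖C_{J→K} ρ_J - ρ_K‖₁ ≤ ∑_{L=K}^{J-1} ‖C_{L+1→L} ρ_{L+1} - ρ_L‖₁`.
Removing two qubits maps `ρ_{L+1}` to an explicit mixture of three neighbouring eigenvalues, and
comparing it with `ρ_L` bounds each step by `A_p / (2L+1)`; the constant comes from the series
`∑ (i+1)(i+2) u^i = 2/(1-u)^3` with `u = (1-p)/p`. For `J ≤ 2K+1` every step is `O(1/J)`, so the
error is `O((J-K)/J) = O(δ)`, while for larger `J` we have `δ ≥ 1/2` and the trivial bound `2`.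
Finally `δ = δ^(1-s) δ^s` puts an `O(δ)` bound in the required form.
-/
open Finset

theorem sum_range_ite_choose_mul_choose {A B a k N : ℕ} (hka : k ≤ a) (hN : k + B < N) :
    ∑ m ∈ range N, (if k ≤ m ∧ m ≤ a then A.choose (a - m) * B.choose (m - k) else 0)
      = (A + B).choose (a - k) := by
  set f : ℕ → ℕ := fun m => if k ≤ m ∧ m ≤ a then A.choose (a - m) * B.choose (m - k) else 0
  have hf : ∀ m ≥ min (a + 1) N, f m = 0 := by
    intro m hm
    by_cases hma : k ≤ m ∧ m ≤ a
    · simp only [f, if_pos hma, Nat.choose_eq_zero_of_lt (by omega : B < m - k), mul_zero]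
    · simp only [f, if_neg hma]
  rw [eventually_constant_sum hf (min_le_right _ _),
    ← eventually_constant_sum hf (min_le_left _ _), show a + 1 = k + (a - k + 1) by omega,
    sum_range_add, add_comm A, Nat.add_choose_eq, Nat.sum_antidiagonal_eq_sum_range_succ_mk,
    sum_eq_zero fun m hm => if_neg (by simp at hm; omega), zero_add]
  refine sum_congr rfl fun t ht => ?_
  simp only [mem_range] at ht
  simp only [f, if_pos (show k ≤ k + t ∧ k + t ≤ a by omega), Nat.add_sub_cancel_left,
    show a - (k + t) = a - k - t by omega, mul_comm]

theorem traceDiag_nonneg (J K a k : ℕ) : 0 ≤ traceDiag J K a k := by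
  unfold traceDiag
  positivity

theorem traceDiag_mul_traceDiag {J L K a m k : ℕ} (hm : m ≤ 2 * L) :
    traceDiag J L a m * traceDiag L K m k
      = (if k ≤ m ∧ m ≤ a then ((2*J-2*L).choose (a-m) * (2*L-2*K).choose (m-k) : ℕ) else 0) *
          ((2*K).choose k : ℝ) / ((2*J).choose a : ℝ) := by
  have hchoose : ((2*L).choose m : ℝ) ≠ 0 := by exact_mod_cast (Nat.choose_pos hm).ne'
  unfold traceDiag
  by_cases h : k ≤ m ∧ m ≤ a
  · rw [if_pos h.2, if_pos h.1, if_pos h]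
    push_cast
    field_simp
  · rcases not_and_or.mp h with h | h <;> simp [h]

theorem traceDiag_comp {J L K a k : ℕ} (hKL : K ≤ L) (hLJ : L ≤ J) (hk : k ≤ 2 * K) :
    ∑ m ∈ range (2*L+1), traceDiag J L a m * traceDiag L K m k = traceDiag J K a k := by
  rw [sum_congr rfl fun m hm => traceDiag_mul_traceDiag (by simp at hm; omega),
    ← sum_div, ← sum_mul, ← Nat.cast_sum]
  unfold traceDiag
  by_cases hka : k ≤ a
  · rw [sum_range_ite_choose_mul_choose hka (by omega), if_pos hka,
      show 2*J-2*L + (2*L-2*K) = 2*J-2*K by omega]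
  · rw [if_neg hka, sum_eq_zero fun m _ => if_neg (by omega)]
    simp

theorem traceDiag_zero {K k : ℕ} (hk : k ≤ 2 * K) : traceDiag K 0 k 0 = 1 := by
  have : ((2*K).choose k : ℝ) ≠ 0 := by exact_mod_cast (Nat.choose_pos hk).ne'
  simp [traceDiag, this]

/-- `C_{K→0}` is the trace, so the row sums come from `traceDiag_comp`. -/
theorem sum_traceDiag {J K a : ℕ} (hKJ : K ≤ J) (ha : a ≤ 2 * J) :
    ∑ k ∈ range (2*K+1), traceDiag J K a k = 1 := by
  rw [← traceDiag_zero ha, ← traceDiag_comp (Nat.zero_le K) hKJ le_rfl]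
  exact sum_congr rfl fun k hk => by rw [traceDiag_zero (by simp at hk; omega), mul_one]

/-- The action of `C_{J→K}` on states diagonal in the Dicke basis, indexed by `a = J + m`. -/
noncomputable def cloneMap (J K : ℕ) (f : ℕ → ℝ) (k : ℕ) : ℝ :=
  ∑ a ∈ range (2*J+1), f a * traceDiag J K a k

theorem cloneMap_cloneMap {J L K k : ℕ} (hKL : K ≤ L) (hLJ : L ≤ J) (hk : k ≤ 2 * K)
    (f : ℕ → ℝ) :
    cloneMap L K (cloneMap J L f) k = cloneMap J K f k := by
  simp only [cloneMap, sum_mul, mul_assoc]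
  rw [sum_comm]
  exact sum_congr rfl fun a _ => by rw [← mul_sum, traceDiag_comp hKL hLJ hk]

theorem cloneMap_sub (J K : ℕ) (f g : ℕ → ℝ) (k : ℕ) :
    cloneMap J K (f - g) k = cloneMap J K f k - cloneMap J K g k := by
  simp only [cloneMap, Pi.sub_apply, sub_mul, sum_sub_distrib]

theorem sum_abs_cloneMap_le {J K : ℕ} (hKJ : K ≤ J) (f : ℕ → ℝ) :
    ∑ k ∈ range (2*K+1), |cloneMap J K f k| ≤ ∑ a ∈ range (2*J+1), |f a| :=
  calc ∑ k ∈ range (2*K+1), |cloneMap J K f k|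
      ≤ ∑ k ∈ range (2*K+1), ∑ a ∈ range (2*J+1), |f a| * traceDiag J K a k := by
        refine sum_le_sum fun k _ => (abs_sum_le_sum_abs _ _).trans_eq ?_
        exact sum_congr rfl fun a _ => by rw [abs_mul, abs_of_nonneg (traceDiag_nonneg ..)]
    _ = ∑ a ∈ range (2*J+1), |f a| := by
        rw [sum_comm]
        refine sum_congr rfl fun a ha => ?_
        rw [← mul_sum, sum_traceDiag hKJ (by simp at ha; omega), mul_one]

noncomputable def gibbsNorm (p : ℝ) (n : ℕ) : ℝ := ∑ b ∈ range (n+1), p^b * (1-p)^(n-b)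

/-- `gibbs p (2*J)` is the spectrum of `ρ_J` (indexed by `a = J + m`), and
`gibbsNorm p (2*J)` is `N_J`. -/
noncomputable def gibbs (p : ℝ) (n k : ℕ) : ℝ := p^k * (1-p)^(n-k) / gibbsNorm p n

theorem pow_le_gibbsNorm {p : ℝ} (hp₀ : 0 ≤ p) (hp₁ : p ≤ 1) (n : ℕ) :
    p^n ≤ gibbsNorm p n := by
  have hq : 0 ≤ 1 - p := by linarith
  simpa [gibbsNorm] using single_le_sum (f := fun b => p^b * (1-p)^(n-b))
    (fun b _ => by positivity) (self_mem_range_succ n)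

theorem gibbsNorm_pos {p : ℝ} (hp₀ : 0 < p) (hp₁ : p ≤ 1) (n : ℕ) : 0 < gibbsNorm p n :=
  (pow_pos hp₀ n).trans_le (pow_le_gibbsNorm hp₀.le hp₁ n)

theorem mul_pow_le_gibbsNorm {p : ℝ} (hq : 0 ≤ 1 - p) (hqp : 1 - p ≤ p) (n : ℕ) :
    (n + 1) * (1-p)^n ≤ gibbsNorm p n := by
  have hterm : ∀ b ∈ range (n+1), (1-p)^n ≤ p^b * (1-p)^(n-b) := fun b hb => by
    rw [← pow_mul_pow_sub _ (show b ≤ n by simp at hb; omega)]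
    gcongr
  simpa [gibbsNorm] using card_nsmul_le_sum _ _ _ hterm

theorem gibbsNorm_add_two (p : ℝ) (n : ℕ) :
    gibbsNorm p (n+2) = p^2 * gibbsNorm p n + (1-p)^(n+1) := by
  simp only [gibbsNorm, sum_range_succ' _ (n + 2), sum_range_succ' _ (n + 1), mul_sum]
  rw [add_assoc]
  congr 1
  · exact sum_congr rfl fun b _ => by rw [show n + 2 - (b + 1 + 1) = n - b by omega]; ring
  · rw [show n + 2 - (0 + 1) = n + 1 by omega, Nat.sub_zero]; ring

theorem gibbs_nonneg {p : ℝ} (hp₀ : 0 < p) (hp₁ : p ≤ 1) (n k : ℕ) : 0 ≤ gibbs p n k := by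
  have hq : 0 ≤ 1 - p := by linarith
  have := gibbsNorm_pos hp₀ hp₁ n
  unfold gibbs
  positivity

theorem sum_gibbs {p : ℝ} (hp₀ : 0 < p) (hp₁ : p ≤ 1) (n : ℕ) :
    ∑ k ∈ range (n+1), gibbs p n k = 1 := by
  unfold gibbs
  rw [← sum_div]
  exact div_self (gibbsNorm_pos hp₀ hp₁ n).ne'

/-- Both states are diagonal, so this is `‖C_{J→K}(ρ_J) - ρ_K‖₁`. -/
noncomputable def cloningError (p : ℝ) (J K : ℕ) : ℝ :=
  ∑ k ∈ range (2*K+1), |cloneMap J K (gibbs p (2*J)) k - gibbs p (2*K) k|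

theorem cloningError_le_two {p : ℝ} (hp₀ : 0 < p) (hp₁ : p ≤ 1) {J K : ℕ} (hKJ : K ≤ J) :
    cloningError p J K ≤ 2 :=
  calc cloningError p J K
      ≤ ∑ k ∈ range (2*K+1), (|cloneMap J K (gibbs p (2*J)) k| + |gibbs p (2*K) k|) :=
        sum_le_sum fun k _ => abs_sub _ _
    _ ≤ ∑ a ∈ range (2*J+1), |gibbs p (2*J) a| + ∑ k ∈ range (2*K+1), |gibbs p (2*K) k| := by
        rw [sum_add_distrib]
        gcongr
        exact sum_abs_cloneMap_le hKJ _
    _ = 2 := by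
        simp only [abs_of_nonneg (gibbs_nonneg hp₀ hp₁ _ _), sum_gibbs hp₀ hp₁]
        norm_num

theorem cloningError_le_add {p : ℝ} {J L K : ℕ} (hKL : K ≤ L) (hLJ : L ≤ J) :
    cloningError p J K ≤ cloningError p J L + cloningError p L K := by
  have hsplit : ∀ k ∈ range (2*K+1), cloneMap J K (gibbs p (2*J)) k - gibbs p (2*K) k =
      cloneMap L K (cloneMap J L (gibbs p (2*J)) - gibbs p (2*L)) k +
        (cloneMap L K (gibbs p (2*L)) k - gibbs p (2*K) k) := fun k hk => by
    rw [cloneMap_sub, cloneMap_cloneMap hKL hLJ (by simp at hk; omega)]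
    ring
  calc cloningError p J K
      ≤ ∑ k ∈ range (2*K+1),
          (|cloneMap L K (cloneMap J L (gibbs p (2*J)) - gibbs p (2*L)) k| +
            |cloneMap L K (gibbs p (2*L)) k - gibbs p (2*K) k|) :=
        sum_le_sum fun k hk => (hsplit k hk).symm ▸ abs_add_le _ _
    _ ≤ cloningError p J L + cloningError p L K := by
        rw [sum_add_distrib]
        exact add_le_add_left (sum_abs_cloneMap_le hKL _) _

theorem cloningError_le_sum {p : ℝ} {b : ℕ → ℝ} (hb : ∀ L, cloningError p (L+1) L ≤ b L)
    {J K : ℕ} (hKJ : K < J) : cloningError p J K ≤ ∑ L ∈ Ico K J, b L := by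
  induction J, hKJ using Nat.le_induction with
  | base => simpa using hb K
  | succ J hKJ ih =>
    rw [sum_Ico_succ_top (by omega)]
    linarith [cloningError_le_add (p := p) (by omega : K ≤ J) (Nat.le_succ J), hb J]

theorem traceDiag_eq_zero_of_lt {J K a k : ℕ} (h : a < k) : traceDiag J K a k = 0 := by
  simp [traceDiag, not_le.mpr h]

theorem traceDiag_succ_eq_zero {L a k : ℕ} (h : k + 3 ≤ a) : traceDiag (L+1) L a k = 0 := by
  rw [traceDiag, if_pos (by omega), show 2*(L+1) - 2*L = 2 by omega,
    Nat.choose_eq_zero_of_lt (by omega)]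
  simp

section traceDiagSucc

variable {L k i : ℕ}

theorem traceDiag_succ_self (hki : k + i = 2 * L) :
    traceDiag (L+1) L k k = ((i:ℝ)+1) * ((i:ℝ)+2) / ((2*L+1) * (2*L+2)) := by
  have h₁ := Nat.choose_mul_succ_eq (2*L) k
  have h₂ := Nat.choose_mul_succ_eq (2*L+1) k
  rw [show 2*L+1-k = i+1 by omega] at h₁
  rw [show 2*L+1+1-k = i+2 by omega] at h₂
  have h₁' : ((2*L).choose k : ℝ) * (2*L+1) = (2*L+1).choose k * (i+1) := by
    exact_mod_cast h₁
  have h₂' : ((2*L+1).choose k : ℝ) * (2*L+2) = (2*L+2).choose k * (i+2) := by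
    exact_mod_cast h₂
  have hpos : ((2*L+2).choose k : ℝ) ≠ 0 := by exact_mod_cast (Nat.choose_pos (by omega)).ne'
  rw [traceDiag, if_pos le_rfl, Nat.sub_self, Nat.choose_zero_right,
    show 2*(L+1) = 2*L+2 by omega, div_eq_div_iff hpos (by positivity)]
  push_cast
  linear_combination (2*(L:ℝ)+2) * h₁' + (i+1) * h₂'

theorem traceDiag_succ_add_one (hki : k + i = 2 * L) :
    traceDiag (L+1) L (k+1) k = 2 * ((k:ℝ)+1) * ((i:ℝ)+1) / ((2*L+1) * (2*L+2)) := by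
  have h₁ := Nat.add_one_mul_choose_eq (2*L) k
  have h₂ := Nat.choose_mul_succ_eq (2*L+1) (k+1)
  rw [show 2*L+1+1-(k+1) = i+1 by omega] at h₂
  have h₁' : (2*L+1) * ((2*L).choose k : ℝ) = (2*L+1).choose (k+1) * (k+1) := by
    exact_mod_cast h₁
  have h₂' : ((2*L+1).choose (k+1) : ℝ) * (2*L+2) = (2*L+2).choose (k+1) * (i+1) := by
    exact_mod_cast h₂
  have hpos : ((2*L+2).choose (k+1) : ℝ) ≠ 0 := by
    exact_mod_cast (Nat.choose_pos (by omega)).ne'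
  rw [traceDiag, if_pos (Nat.le_succ k), Nat.add_sub_cancel_left,
    show 2*(L+1) - 2*L = 2 by omega, Nat.choose_one_right, show 2*(L+1) = 2*L+2 by omega,
    div_eq_div_iff hpos (by positivity)]
  push_cast
  linear_combination 2 * (2*(L:ℝ)+2) * h₁' + 2 * (k+1) * h₂'

theorem traceDiag_succ_add_two (hki : k + i = 2 * L) :
    traceDiag (L+1) L (k+2) k = ((k:ℝ)+1) * ((k:ℝ)+2) / ((2*L+1) * (2*L+2)) := by
  have h₁ := Nat.add_one_mul_choose_eq (2*L) k
  have h₂ := Nat.add_one_mul_choose_eq (2*L+1) (k+1)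
  have h₁' : (2*L+1) * ((2*L).choose k : ℝ) = (2*L+1).choose (k+1) * (k+1) := by
    exact_mod_cast h₁
  have h₂' : (2*L+2) * ((2*L+1).choose (k+1) : ℝ) = (2*L+2).choose (k+2) * (k+2) := by
    exact_mod_cast h₂
  have hpos : ((2*L+2).choose (k+2) : ℝ) ≠ 0 := by
    exact_mod_cast (Nat.choose_pos (by omega)).ne'
  rw [traceDiag, if_pos (by omega), Nat.add_sub_cancel_left, show 2*(L+1) - 2*L = 2 by omega,
    Nat.choose_self, show 2*(L+1) = 2*L+2 by omega, div_eq_div_iff hpos (by positivity)]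
  push_cast
  linear_combination (2*(L:ℝ)+2) * h₁' + (k+1) * h₂'

end traceDiagSucc

theorem cloneMap_succ_apply (f : ℕ → ℝ) {L k i : ℕ} (hki : k + i = 2 * L) :
    cloneMap (L+1) L f k = (f k * (((i:ℝ)+1) * ((i:ℝ)+2)) + f (k+1) * (2 * ((k:ℝ)+1) * ((i:ℝ)+1)) +
      f (k+2) * (((k:ℝ)+1) * ((k:ℝ)+2))) / ((2*L+1) * (2*L+2)) := by
  rw [cloneMap, show 2*(L+1)+1 = k + (3 + i) by omega, sum_range_add, sum_range_add,
    sum_eq_zero (s := range k) fun a ha => by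
      rw [traceDiag_eq_zero_of_lt (by simpa using ha), mul_zero],
    sum_eq_zero (s := range i) fun a _ => by rw [traceDiag_succ_eq_zero (by omega), mul_zero]]
  simp only [sum_range_succ, sum_range_zero, add_zero, zero_add, traceDiag_succ_self hki,
    traceDiag_succ_add_one hki, traceDiag_succ_add_two hki]
  ring

theorem cloneMap_succ_gibbs (p : ℝ) {L k i : ℕ} (hki : k + i = 2 * L) :
    cloneMap (L+1) L (gibbs p (2*(L+1))) k = p^k * (1-p)^i *
      ((1-p)^2 * ((i:ℝ)+1) * ((i:ℝ)+2) + 2 * p * (1-p) * ((k:ℝ)+1) * ((i:ℝ)+1) +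
        p^2 * ((k:ℝ)+1) * ((k:ℝ)+2)) / gibbsNorm p (2*(L+1)) / ((2*L+1) * (2*L+2)) := by
  rw [cloneMap_succ_apply _ hki]
  simp only [gibbs, show 2*(L+1) - k = i + 2 by omega, show 2*(L+1) - (k+1) = i + 1 by omega,
    show 2*(L+1) - (k+2) = i by omega]
  ring

theorem abs_hypergeom_sub_le {p k i : ℝ} (hp₀ : 0 ≤ p) (hp₁ : p ≤ 1) (hk : 0 ≤ k) (hi : 0 ≤ i) :
    |(1-p)^2 * (i+1) * (i+2) + 2 * p * (1-p) * (k+1) * (i+1) + p^2 * (k+1) * (k+2)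
      - p^2 * ((k+i+1) * (k+i+2))| ≤ 2 * (k+i+2) * ((i+1) * (i+2)) := by
  have hq : 0 ≤ 1 - p := by linarith
  have hsplit : (1-p)^2 * (i+1) * (i+2) + 2 * p * (1-p) * (k+1) * (i+1) + p^2 * (k+1) * (k+2)
      - p^2 * ((k+i+1) * (k+i+2)) = (1-p)^2 * (i+1) * (i+2) + 2 * p * (1-p) * (k+1) * (i+1)
        - p^2 * (i * (2*k+i+3)) := by ring
  have ha : (1-p)^2 * (i+1) * (i+2) ≤ (k+i+2) * ((i+1) * (i+2)) := by
    have : (1-p)^2 ≤ 1 := pow_le_one₀ hq (by linarith)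
    nlinarith [mul_le_mul_of_nonneg_right this (by positivity : 0 ≤ (i+1) * (i+2)),
      mul_nonneg (add_nonneg hk hi) (by positivity : 0 ≤ (i+1) * (i+2))]
  have hb : 2 * p * (1-p) * (k+1) * (i+1) ≤ (k+i+2) * ((i+1) * (i+2)) := by
    have : 2 * p * (1-p) ≤ 1 := by nlinarith [sq_nonneg (2*p-1)]
    nlinarith [mul_le_mul_of_nonneg_right this (by positivity : 0 ≤ (k+1) * (i+1)),
      mul_nonneg (mul_nonneg hk hi) hi, mul_nonneg hi hi, mul_nonneg hk hi]
  have hc : p^2 * (i * (2*k+i+3)) ≤ (k+i+2) * ((i+1) * (i+2)) := by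
    have : p^2 ≤ 1 := pow_le_one₀ hp₀ hp₁
    nlinarith [mul_le_mul_of_nonneg_right this (by positivity : 0 ≤ i * (2*k+i+3)),
      mul_nonneg (mul_nonneg hk hi) hi, mul_nonneg hi hi, mul_nonneg hk hi]
  have ha₀ : 0 ≤ (1-p)^2 * (i+1) * (i+2) := by positivity
  have hb₀ : 0 ≤ 2 * p * (1-p) * (k+1) * (i+1) := by positivity
  have hc₀ : 0 ≤ p^2 * (i * (2*k+i+3)) := by positivity
  rw [hsplit, abs_le]
  constructor <;> linarith

theorem abs_cloneMap_succ_gibbs_sub_le {p : ℝ} (hp₀ : 0 < p) (hp₁ : p ≤ 1) {L k i : ℕ}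
    (hki : k + i = 2 * L) :
    |cloneMap (L+1) L (gibbs p (2*(L+1))) k - gibbs p (2*L) k| ≤
      2 * (p^k * (1-p)^i * (((i:ℝ)+1) * ((i:ℝ)+2))) / gibbsNorm p (2*(L+1)) / (2*L+1)
        + gibbs p (2*L) k * ((1-p)^(2*L+1) / gibbsNorm p (2*(L+1))) := by
  have hq : 0 ≤ 1 - p := by linarith
  have hZ := gibbsNorm_pos hp₀ hp₁ (2*L)
  have hZ' := gibbsNorm_pos hp₀ hp₁ (2*(L+1))
  have hkiR : (k:ℝ) + i = 2 * L := by exact_mod_cast hki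
  set P : ℝ := (1-p)^2 * ((i:ℝ)+1) * ((i:ℝ)+2) + 2 * p * (1-p) * ((k:ℝ)+1) * ((i:ℝ)+1) +
    p^2 * ((k:ℝ)+1) * ((k:ℝ)+2) with hP
  set D : ℝ := (2*L+1) * (2*L+2) with hD
  have hdiff : cloneMap (L+1) L (gibbs p (2*(L+1))) k - gibbs p (2*L) k =
      p^k * (1-p)^i * (P - p^2 * D) / gibbsNorm p (2*(L+1)) / D
        - gibbs p (2*L) k * ((1-p)^(2*L+1) / gibbsNorm p (2*(L+1))) := by
    rw [cloneMap_succ_gibbs p hki, gibbs, show 2*L - k = i by omega,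
      show 2*(L+1) = 2*L+2 by ring, gibbsNorm_add_two, hP, hD]
    field_simp
    ring
  have hpoly : |P - p^2 * D| ≤ 2 * (2*L+2) * (((i:ℝ)+1) * ((i:ℝ)+2)) := by
    have := abs_hypergeom_sub_le hp₀.le hp₁ k.cast_nonneg i.cast_nonneg
    rwa [hkiR] at this
  rw [hdiff]
  refine (abs_sub _ _).trans (add_le_add ?_ (abs_of_nonneg ?_).le)
  · rw [abs_div, abs_div, abs_mul, abs_of_pos hZ', abs_of_pos (by positivity : 0 < D),
      abs_of_nonneg (by positivity : 0 ≤ p^k * (1-p)^i)]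
    calc p^k * (1-p)^i * |P - p^2 * D| / gibbsNorm p (2*(L+1)) / D
        ≤ p^k * (1-p)^i * (2 * (2*L+2) * (((i:ℝ)+1) * ((i:ℝ)+2))) / gibbsNorm p (2*(L+1)) / D := by
          gcongr
      _ = _ := by rw [hD]; field_simp
  · have := gibbs_nonneg hp₀ hp₁ (2*L) k
    positivity

theorem sum_range_mul_geometric_le {u : ℝ} (hu₀ : 0 ≤ u) (hu₁ : u < 1) (N : ℕ) :
    ∑ i ∈ range N, ((i:ℝ)+1) * ((i:ℝ)+2) * u^i ≤ 2 / (1-u)^3 := by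
  have hsum := hasSum_choose_mul_geometric_of_norm_lt_one (𝕜 := ℝ) 2
    (by rwa [Real.norm_eq_abs, abs_of_nonneg hu₀])
  calc ∑ i ∈ range N, ((i:ℝ)+1) * ((i:ℝ)+2) * u^i
      = 2 * ∑ i ∈ range N, ((i + 2).choose 2 : ℝ) * u^i := by
        rw [mul_sum]
        refine sum_congr rfl fun i _ => ?_
        rw [Nat.cast_choose_two]
        push_cast
        ring
    _ ≤ 2 * (1 / (1-u)^(2+1)) := by
        gcongr
        exact sum_le_hasSum _ (fun i _ => by positivity) hsum
    _ = 2 / (1-u)^3 := by ring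

theorem sum_pow_mul_pow_mul_le {p q : ℝ} (hq : 0 ≤ q) (hqp : q < p) (n : ℕ) :
    ∑ k ∈ range (n+1), p^k * q^(n-k) * ((((n-k : ℕ)) : ℝ)+1) * ((((n-k : ℕ)) : ℝ)+2)
      ≤ 2 * p^(n+3) / (p-q)^3 := by
  have hp : 0 < p := hq.trans_lt hqp
  have hu₁ : q / p < 1 := (div_lt_one hp).mpr hqp
  rw [← sum_range_reflect]
  calc ∑ j ∈ range (n+1), p^(n+1-1-j) * q^(n-(n+1-1-j)) *
        ((((n-(n+1-1-j) : ℕ)) : ℝ)+1) * ((((n-(n+1-1-j) : ℕ)) : ℝ)+2)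
      = p^n * ∑ j ∈ range (n+1), ((j:ℝ)+1) * ((j:ℝ)+2) * (q/p)^j := by
        rw [mul_sum]
        refine sum_congr rfl fun j hj => ?_
        have hj : j ≤ n := by simpa [Nat.lt_succ_iff] using hj
        rw [show n+1-1-j = n-j by omega, show n-(n-j) = j by omega, div_pow,
          pow_sub₀ p hp.ne' hj]
        field_simp
    _ ≤ p^n * (2 / (1 - q/p)^3) := by
        gcongr
        exact sum_range_mul_geometric_le (by positivity) hu₁ _
    _ = 2 * p^(n+3) / (p-q)^3 := by
        rw [one_sub_div hp.ne', div_pow, div_div_eq_mul_div]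
        ring

theorem cloningError_succ_le {p : ℝ} (hp : 1/2 < p) (hp₁ : p < 1) (L : ℕ) :
    cloningError p (L+1) L ≤ (4*p/(2*p-1)^3 + 1/(1-p)) / (2*L+1) := by
  have hp₀ : 0 < p := by linarith
  have hq : 0 < 1 - p := by linarith
  have hZ' := gibbsNorm_pos hp₀ hp₁.le (2*(L+1))
  set S := ∑ k ∈ range (2*L+1), p^k * (1-p)^(2*L-k) *
    ((((2*L-k : ℕ)) : ℝ)+1) * ((((2*L-k : ℕ)) : ℝ)+2)
  calc cloningError p (L+1) L
      ≤ ∑ k ∈ range (2*L+1),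
          (2 * (p^k * (1-p)^(2*L-k) * ((((2*L-k : ℕ)) : ℝ)+1) * ((((2*L-k : ℕ)) : ℝ)+2))
              / gibbsNorm p (2*(L+1)) / (2*L+1)
            + gibbs p (2*L) k * ((1-p)^(2*L+1) / gibbsNorm p (2*(L+1)))) := by
        refine sum_le_sum fun k hk => ?_
        have hki : k + (2*L-k) = 2*L := by simp at hk; omega
        simpa only [mul_assoc] using abs_cloneMap_succ_gibbs_sub_le hp₀ hp₁.le hki
    _ = 2 * S / gibbsNorm p (2*(L+1)) / (2*L+1) + (1-p)^(2*L+1) / gibbsNorm p (2*(L+1)) := by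
        rw [sum_add_distrib, ← sum_mul, sum_gibbs hp₀ hp₁.le, one_mul, ← sum_div, ← sum_div,
          ← mul_sum]
    _ ≤ 2 * (2 * p^(2*L+3) / (p-(1-p))^3) / p^(2*(L+1)) / (2*L+1)
          + (1-p)^(2*L+1) / ((2*(L+1) + 1) * (1-p)^(2*(L+1))) := by
        have hZq : ((2*(L+1) : ℕ) + 1 : ℝ) * (1-p)^(2*(L+1)) ≤ gibbsNorm p (2*(L+1)) :=
          mul_pow_le_gibbsNorm hq.le (by linarith) _
        push_cast at hZq
        have hS := sum_pow_mul_pow_mul_le hq.le (show 1-p < p by linarith) (2*L)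
        have hZp := pow_le_gibbsNorm hp₀.le hp₁.le (2*(L+1))
        have : 0 < p - (1-p) := by linarith
        gcongr 2 * ?_ / ?_ / _ + _ / ?_
    _ ≤ (4*p/(2*p-1)^3 + 1/(1-p)) / (2*L+1) := by
        rw [add_div]
        refine add_le_add (le_of_eq ?_) ?_
        · rw [show 2*L+3 = 2*(L+1)+1 by ring, pow_succ, show p - (1-p) = 2*p-1 by ring]
          field_simp
          ring
        · calc (1-p)^(2*L+1) / ((2*(L+1) + 1) * (1-p)^(2*(L+1)))
              = 1/(1-p) / (2*L+3) := by
                rw [show 2*(L+1) = 2*L+1+1 by ring, pow_succ]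
                field_simp
                ring
            _ ≤ 1/(1-p) / (2*L+1) := by gcongr; linarith

theorem cloningError_le_mul {p : ℝ} (hp : 1/2 < p) (hp₁ : p < 1) {J K : ℕ} (hKJ : K < J) :
    cloningError p J K ≤ (4*p/(2*p-1)^3 + 1/(1-p) + 4) * ((J - K) / J) := by
  set A := 4*p/(2*p-1)^3 + 1/(1-p)
  have hA : 0 ≤ A := by
    have : 0 < 2*p - 1 := by linarith
    have : 0 < 1 - p := by linarith
    positivity
  have hJ : (0:ℝ) < J := by exact_mod_cast (Nat.zero_le K).trans_lt hKJ
  have hδ : 0 ≤ ((J:ℝ) - K) / J := div_nonneg (by simp [hKJ.le]) hJ.le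
  rcases le_or_gt J (2*K+1) with hJK | hJK
  · calc cloningError p J K
        ≤ ∑ L ∈ Ico K J, A / (2*L+1) := cloningError_le_sum (cloningError_succ_le hp hp₁) hKJ
      _ ≤ ∑ L ∈ Ico K J, A / J := by
          refine sum_le_sum fun L hL => div_le_div_of_nonneg_left hA hJ ?_
          have : J ≤ 2*L+1 := by simp at hL; omega
          exact_mod_cast this
      _ = A * ((J - K) / J) := by
          rw [sum_const, Nat.card_Ico, nsmul_eq_mul, Nat.cast_sub hKJ.le]
          ring
      _ ≤ (A + 4) * ((J - K) / J) := by gcongr; linarith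
  · have hhalf : 1/2 ≤ ((J:ℝ) - K) / J := by
      rw [le_div_iff₀ hJ]
      have : (2*K:ℝ) + 1 < J := by exact_mod_cast hJK
      linarith
    calc cloningError p J K ≤ 2 := cloningError_le_two (by linarith) hp₁.le hKJ.le
      _ ≤ (A + 4) * ((J - K) / J) := by nlinarith

open Finset in
theorem cloning_error_partial_trace_general (p : ℝ) (hp : 1/2 < p) (hp1 : p < 1)
    (s : ℝ) :
    ∃ C : ℝ, 0 < C ∧ ∀ J K : ℕ, K < J →
      (1/2) * ∑ k' ∈ range (2*K+1),
          |(∑ a ∈ range (2*J+1),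
              (p^a * (1-p)^(2*J-a) / ∑ b ∈ range (2*J+1), p^b * (1-p)^(2*J-b)) *
                traceDiag J K a k')
            - p^(k') * (1-p)^(2*K-k') / ∑ b ∈ range (2*K+1), p^b * (1-p)^(2*K-b)|
        ≤ ((((J : ℝ) - K)/J) ^ ((1:ℝ) - s) / 2) * (1 + C * (((J : ℝ) - K)/J) ^ (s : ℝ)) := by
  set C : ℝ := 4*p/(2*p-1)^3 + 1/(1-p) + 4
  refine ⟨C, ?_, fun J K hKJ => ?_⟩
  · have : 0 < 2*p - 1 := by linarith
    have : 0 < 1 - p := by linarith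
    positivity
  set δ : ℝ := ((J:ℝ) - K) / J
  have hδ : 0 < δ := div_pos (by simp [hKJ]) (by exact_mod_cast (Nat.zero_le K).trans_lt hKJ)
  have hsplit : δ ^ ((1:ℝ) - s) * δ ^ s = δ := by
    rw [← Real.rpow_add hδ, sub_add_cancel, Real.rpow_one]
  have := Real.rpow_pos_of_pos hδ (1 - s)
  calc (1/2) * cloningError p J K
      ≤ (1/2) * (C * δ) := by gcongr; exact cloningError_le_mul hp hp1 hKJ
    _ = C * (δ ^ ((1:ℝ) - s) * δ ^ s) / 2 := by rw [hsplit]; ring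
    _ ≤ δ ^ ((1:ℝ) - s) / 2 * (1 + C * δ ^ s) := by linarith

open Finset in
/-- Lemma 1, case `J > K`: for `1/2 < p < 1` and any `s > 0` there is a constant
`C > 0` such that for all `K < J`, with `δ = (J-K)/J`, the trace distance between
`C_{J→K}(ρ_J) = Tr_{2(J-K)}[ρ_J]` and the Gibbs state `ρ_K` satisfies
`(1/2)‖Tr_{2(J-K)}[ρ_J] − ρ_K‖₁ ≤ (δ^(1-s)/2)(1 + C δ^s)`.  Both states are diagonal
in the `|K,k⟩` basis, so the trace distance is the ℓ¹-distance of the spectra; the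
eigenvalues of `ρ_J` are `p^a (1-p)^(2J-a)/N_J` (with `a = J+m`). -/
theorem cloning_error_partial_trace (p : ℝ) (hp : 1/2 < p) (hp1 : p < 1)
    (s : ℝ) (hs : 0 < s) :
    ∃ C : ℝ, 0 < C ∧ ∀ J K : ℕ, K < J →
      (1/2) * ∑ k' ∈ range (2*K+1),
          |(∑ a ∈ range (2*J+1),
              (p^a * (1-p)^(2*J-a) / ∑ b ∈ range (2*J+1), p^b * (1-p)^(2*J-b)) *
                traceDiag J K a k')
            - p^(k') * (1-p)^(2*K-k') / ∑ b ∈ range (2*K+1), p^b * (1-p)^(2*K-b)|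
        ≤ ((((J : ℝ) - K)/J) ^ ((1:ℝ) - s) / 2) * (1 + C * (((J : ℝ) - K)/J) ^ (s : ℝ)) :=
  cloning_error_partial_trace_general p hp hp1 s
end
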